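/- Let α ∈ (0,1), β > 0 and a₂ > a₁ > 0, b₂ > b₁ > 0 satisfy a₂b₁ = a₁b₂ (restriction (T1)), the strict restriction a₂ > 2b₂·cosh(βπ/2)·√(1 + cot²(απ/2)·tanh²(βπ/2)) (strict (T2₂)), and a_i ≥ 2b_i·cosh(βπ/2)·√(1 + tan²(απ/2)·tanh²(βπ/2)) for i = 1,2 (restrictions (T3₁), (T3₂)). Then for every ω > 0, the quantity M²(iω) = Q(iω)/P(iω) satisfies Re M²(iω) > 0 and Im M²(iω) < 0, and its principal square root M(iω) = (Q(iω)/P(iω))^{1/2} satisfies Re M(iω) > 0 and Im M(iω) < 0. -/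

import Mathlib

/-- `φ_{a,b}(s) = 1 + a·s^α + b·(s^{α+iβ} + s^{α−iβ})`, with principal complex powers. -/
noncomputable def phi (α β a b : ℝ) (s : ℂ) : ℂ :=
  1 + (a : ℂ) * s ^ (α : ℂ) +
    (b : ℂ) * (s ^ ((α : ℂ) + Complex.I * (β : ℂ)) + s ^ ((α : ℂ) - Complex.I * (β : ℂ)))

/-- The constant `cosh(βπ/2)·√(1 + cot²(απ/2)·tanh²(βπ/2))` appearing in restrictions (T2). -/
noncomputable def Ccot (α β : ℝ) : ℝ :=
  Real.cosh (β * (Real.pi / 2)) *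
    Real.sqrt (1 + (Real.cot (α * (Real.pi / 2)) * Real.tanh (β * (Real.pi / 2))) ^ 2)

/-- The constant `cosh(βπ/2)·√(1 + tan²(απ/2)·tanh²(βπ/2))` appearing in restrictions (T3). -/
noncomputable def Ctan (α β : ℝ) : ℝ :=
  Real.cosh (β * (Real.pi / 2)) *
    Real.sqrt (1 + (Real.tan (α * (Real.pi / 2)) * Real.tanh (β * (Real.pi / 2))) ^ 2)

/-! On the imaginary axis `(iω)^{α ± iβ} = (iω)^α e^{±iβ log(iω)}`, so
`w := φ_{a,b}(iω) - 1 = (iω)^α (a + 2b cos(β log ω + iβπ/2))`. With `θ = απ/2`, the real part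
of `w` is `ω^α (a cos θ + 2b (c cos t + d sin t))` for suitable `c, d`, and
`c cos t + d sin t ≥ -√(c² + d²) = -cos θ · Ctan`; likewise for the imaginary part with `sin θ`
and `Ccot`. So (T3) gives `Re w ≥ 0` and strict (T2) gives `Im w > 0`.
By (T1), `Q = 1 + λ (P - 1)` with `λ = b₁/b₂ ∈ (0, 1)`, and
`(1 + λw) · conj (1 + w)` has positive real part and imaginary part `(λ - 1) Im w < 0`.
The principal square root halves the argument, which therefore stays in `(-π/4, 0)`. -/
open Complex

lemma Real.neg_sqrt_sq_add_sq_le (c d t : ℝ) :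
    -√(c ^ 2 + d ^ 2) ≤ c * Real.cos t + d * Real.sin t := by
  refine neg_le_of_abs_le (Real.abs_le_sqrt ?_)
  nlinarith [Real.sin_sq_add_cos_sq t, sq_nonneg (c * Real.sin t - d * Real.cos t)]

lemma Real.mul_sqrt_one_add_div_sq {x : ℝ} (hx : 0 < x) (y : ℝ) :
    x * √(1 + (y / x) ^ 2) = √(x ^ 2 + y ^ 2) := by
  rw [← Real.sqrt_sq hx.le, ← Real.sqrt_mul (sq_nonneg x), Real.sqrt_sq hx.le]
  congr 1
  field_simp

lemma Complex.log_I_mul_ofReal {ω : ℝ} (hω : 0 < ω) :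
    log (I * ω) = Real.log ω + Real.pi / 2 * I := by
  rw [log_mul_ofReal ω hω I I_ne_zero, log_I]

lemma phi_sub_one_eq_cpow_mul_cos (α β a b : ℝ) {s : ℂ} (hs : s ≠ 0) :
    phi α β a b s - 1 = s ^ (α : ℂ) * (a + 2 * b * cos (β * log s)) := by
  rw [phi, sub_eq_add_neg (α : ℂ), cpow_add _ _ hs, cpow_add _ _ hs, mul_right_comm 2, two_cos]
  simp only [cpow_def_of_ne_zero hs]
  ring_nf

lemma phi_I_mul_sub_one (α β a b : ℝ) {ω : ℝ} (hω : 0 < ω) :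
    phi α β a b (I * ω) - 1 = (ω ^ α : ℝ) * exp ((α * (Real.pi / 2) : ℝ) * I) *
      (a + 2 * b * cos ((β * Real.log ω : ℝ) + (β * (Real.pi / 2) : ℝ) * I)) := by
  have hIω : I * (ω : ℂ) ≠ 0 := mul_ne_zero I_ne_zero (ofReal_ne_zero.2 hω.ne')
  rw [phi_sub_one_eq_cpow_mul_cos α β a b hIω, cpow_def_of_ne_zero hIω, log_I_mul_ofReal hω,
    Real.rpow_def_of_pos hω, ofReal_exp, ← exp_add]
  push_cast
  ring_nf

lemma re_phi_I_mul_sub_one (α β a b : ℝ) {ω : ℝ} (hω : 0 < ω) :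
    (phi α β a b (I * ω) - 1).re = ω ^ α * (a * Real.cos (α * (Real.pi / 2)) +
      2 * b * (Real.cos (α * (Real.pi / 2)) * Real.cosh (β * (Real.pi / 2)) *
          Real.cos (β * Real.log ω) +
        Real.sin (α * (Real.pi / 2)) * Real.sinh (β * (Real.pi / 2)) *
          Real.sin (β * Real.log ω))) := by
  rw [phi_I_mul_sub_one α β a b hω, cos_add_mul_I, exp_mul_I]
  simp only [← ofReal_cos, ← ofReal_sin, ← ofReal_cosh, ← ofReal_sinh, mul_re, mul_im, add_re,
    add_im, sub_re, sub_im, ofReal_re, ofReal_im, I_re, I_im, re_ofNat, im_ofNat]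
  ring

lemma im_phi_I_mul_sub_one (α β a b : ℝ) {ω : ℝ} (hω : 0 < ω) :
    (phi α β a b (I * ω) - 1).im = ω ^ α * (a * Real.sin (α * (Real.pi / 2)) +
      2 * b * (Real.sin (α * (Real.pi / 2)) * Real.cosh (β * (Real.pi / 2)) *
          Real.cos (β * Real.log ω) -
        Real.cos (α * (Real.pi / 2)) * Real.sinh (β * (Real.pi / 2)) *
          Real.sin (β * Real.log ω))) := by
  rw [phi_I_mul_sub_one α β a b hω, cos_add_mul_I, exp_mul_I]
  simp only [← ofReal_cos, ← ofReal_sin, ← ofReal_cosh, ← ofReal_sinh, mul_re, mul_im, add_re,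
    add_im, sub_re, sub_im, ofReal_re, ofReal_im, I_re, I_im, re_ofNat, im_ofNat]
  ring

lemma Real.sqrt_sq_add_sq_eq_cos_mul {θ : ℝ} (hθ : 0 < Real.cos θ) (h : ℝ) :
    √((Real.cos θ * Real.cosh h) ^ 2 + (Real.sin θ * Real.sinh h) ^ 2) =
      Real.cos θ * (Real.cosh h * √(1 + (Real.tan θ * Real.tanh h) ^ 2)) := by
  rw [Real.tan_eq_sin_div_cos, Real.tanh_eq_sinh_div_cosh, div_mul_div_comm, ← mul_assoc,
    Real.mul_sqrt_one_add_div_sq (mul_pos hθ (Real.cosh_pos h))]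

lemma Real.sqrt_sq_add_sq_eq_sin_mul {θ : ℝ} (hθ : 0 < Real.sin θ) (h : ℝ) :
    √((Real.sin θ * Real.cosh h) ^ 2 + (-(Real.cos θ * Real.sinh h)) ^ 2) =
      Real.sin θ * (Real.cosh h * √(1 + (Real.cot θ * Real.tanh h) ^ 2)) := by
  rw [Real.cot_eq_cos_div_sin, Real.tanh_eq_sinh_div_cosh, div_mul_div_comm, ← mul_assoc,
    Real.mul_sqrt_one_add_div_sq (mul_pos hθ (Real.cosh_pos h)), neg_sq]

lemma Real.mul_cos_add_mul_cos_cosh_add_sin_sinh_nonneg {θ h a b : ℝ} (hθ : 0 < Real.cos θ)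
    (hb : 0 ≤ b) (hab : 2 * b * (Real.cosh h * √(1 + (Real.tan θ * Real.tanh h) ^ 2)) ≤ a)
    (t : ℝ) :
    0 ≤ a * Real.cos θ + 2 * b * (Real.cos θ * Real.cosh h * Real.cos t +
      Real.sin θ * Real.sinh h * Real.sin t) := by
  have hcs := Real.neg_sqrt_sq_add_sq_le (Real.cos θ * Real.cosh h) (Real.sin θ * Real.sinh h) t
  rw [Real.sqrt_sq_add_sq_eq_cos_mul hθ] at hcs
  nlinarith [mul_nonneg hθ.le (sub_nonneg.2 hab)]

lemma Real.mul_sin_add_mul_sin_cosh_sub_cos_sinh_pos {θ h a b : ℝ} (hθ : 0 < Real.sin θ)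
    (hb : 0 ≤ b) (hab : 2 * b * (Real.cosh h * √(1 + (Real.cot θ * Real.tanh h) ^ 2)) < a)
    (t : ℝ) :
    0 < a * Real.sin θ + 2 * b * (Real.sin θ * Real.cosh h * Real.cos t -
      Real.cos θ * Real.sinh h * Real.sin t) := by
  have hcs :=
    Real.neg_sqrt_sq_add_sq_le (Real.sin θ * Real.cosh h) (-(Real.cos θ * Real.sinh h)) t
  rw [Real.sqrt_sq_add_sq_eq_sin_mul hθ] at hcs
  nlinarith [mul_pos hθ (sub_pos.2 hab)]

lemma mul_pi_div_two_mem_Ioo {α : ℝ} (hα : α ∈ Set.Ioo (0 : ℝ) 1) :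
    α * (Real.pi / 2) ∈ Set.Ioo 0 (Real.pi / 2) :=
  ⟨by nlinarith [hα.1, Real.pi_pos], by nlinarith [hα.2, Real.pi_pos]⟩

lemma re_phi_I_mul_sub_one_nonneg {α β a b ω : ℝ} (hα : α ∈ Set.Ioo (0 : ℝ) 1) (hb : 0 ≤ b)
    (hT3 : 2 * b * Ctan α β ≤ a) (hω : 0 < ω) : 0 ≤ (phi α β a b (I * ω) - 1).re := by
  obtain ⟨hθ₀, hθ₁⟩ := mul_pi_div_two_mem_Ioo hα
  rw [re_phi_I_mul_sub_one α β a b hω]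
  exact mul_nonneg (Real.rpow_nonneg hω.le α)
    (Real.mul_cos_add_mul_cos_cosh_add_sin_sinh_nonneg
      (Real.cos_pos_of_mem_Ioo ⟨by linarith, hθ₁⟩) hb hT3 _)

lemma im_phi_I_mul_sub_one_pos {α β a b ω : ℝ} (hα : α ∈ Set.Ioo (0 : ℝ) 1) (hb : 0 ≤ b)
    (hT2 : 2 * b * Ccot α β < a) (hω : 0 < ω) : 0 < (phi α β a b (I * ω) - 1).im := by
  obtain ⟨hθ₀, hθ₁⟩ := mul_pi_div_two_mem_Ioo hα
  rw [im_phi_I_mul_sub_one α β a b hω]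
  exact mul_pos (Real.rpow_pos_of_pos hω α)
    (Real.mul_sin_add_mul_sin_cosh_sub_cos_sinh_pos
      (Real.sin_pos_of_pos_of_lt_pi hθ₀ (by linarith [Real.pi_pos])) hb hT2 _)

lemma phi_mul_mul (α β a b c : ℝ) (s : ℂ) :
    phi α β (c * a) (c * b) s = 1 + c * (phi α β a b s - 1) := by
  simp only [phi]
  push_cast
  ring

def InFourthQuadrant (z : ℂ) : Prop := 0 < z.re ∧ z.im < 0

lemma inFourthQuadrant_one_add_mul_div_one_add {w : ℂ} {c : ℝ} (hre : 0 ≤ w.re)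
    (him : 0 < w.im) (hc₀ : 0 < c) (hc₁ : c < 1) :
    InFourthQuadrant ((1 + c * w) / (1 + w)) := by
  have hnormSq : 0 < normSq (1 + w) := normSq_pos.2 <| ne_of_apply_ne re <| by
    rw [add_re, one_re, zero_re]
    exact (by linarith : (0 : ℝ) < 1 + w.re).ne'
  constructor
  · rw [div_re, ← add_div]
    apply div_pos _ hnormSq
    simp only [add_re, add_im, one_re, one_im, re_ofReal_mul, im_ofReal_mul]
    nlinarith [mul_nonneg hc₀.le hre, mul_pos hc₀ (mul_pos him him)]
  · rw [div_im, div_sub_div_same]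
    apply div_neg_of_neg_of_pos _ hnormSq
    simp only [add_re, add_im, one_re, one_im, re_ofReal_mul, im_ofReal_mul]
    nlinarith

lemma InFourthQuadrant.cpow_one_half {z : ℂ} (hz : InFourthQuadrant z) :
    InFourthQuadrant (z ^ ((1 : ℂ) / 2)) := by
  have harg₀ : z.arg < 0 := arg_neg_iff.2 hz.2
  have harg₁ : -(Real.pi / 2) < z.arg := (abs_lt.1 (abs_arg_lt_pi_div_two_iff.2 (.inl hz.1))).1
  have hnorm : 0 < ‖z‖ := norm_pos_iff.2 fun h => by simpa [h] using hz.1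
  rw [show (1 : ℂ) / 2 = ((1 / 2 : ℝ) : ℂ) by push_cast; rfl]
  refine ⟨?_, ?_⟩
  · rw [cpow_ofReal_re]
    exact mul_pos (Real.rpow_pos_of_pos hnorm _)
      (Real.cos_pos_of_mem_Ioo ⟨by linarith, by linarith⟩)
  · rw [cpow_ofReal_im]
    exact mul_neg_of_pos_of_neg (Real.rpow_pos_of_pos hnorm _)
      (Real.sin_neg_of_neg_of_neg_pi_lt (by linarith) (by linarith))

theorem stmt_18_general (α β a₁ a₂ b₁ b₂ : ℝ) (hα : α ∈ Set.Ioo (0:ℝ) 1)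
    (hb₁ : 0 < b₁) (hb : b₁ < b₂)
    (hT1 : a₂ * b₁ = a₁ * b₂) (hT2s : a₂ > 2 * b₂ * Ccot α β)
    (hT3₂ : a₂ ≥ 2 * b₂ * Ctan α β) :
    ∀ ω : ℝ, 0 < ω →
      0 < (phi α β a₁ b₁ (Complex.I * (ω : ℂ)) / phi α β a₂ b₂ (Complex.I * (ω : ℂ))).re ∧
      (phi α β a₁ b₁ (Complex.I * (ω : ℂ)) / phi α β a₂ b₂ (Complex.I * (ω : ℂ))).im < 0 ∧
      0 < ((phi α β a₁ b₁ (Complex.I * (ω : ℂ)) / phi α β a₂ b₂ (Complex.I * (ω : ℂ))) ^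
            ((1 : ℂ) / 2)).re ∧
      ((phi α β a₁ b₁ (Complex.I * (ω : ℂ)) / phi α β a₂ b₂ (Complex.I * (ω : ℂ))) ^
            ((1 : ℂ) / 2)).im < 0 := by
  intro ω hω
  have hb₂ : 0 < b₂ := hb₁.trans hb
  obtain ⟨c, hc₀, hc₁, rfl, rfl⟩ : ∃ c : ℝ, 0 < c ∧ c < 1 ∧ a₁ = c * a₂ ∧ b₁ = c * b₂ :=
    ⟨b₁ / b₂, div_pos hb₁ hb₂, (div_lt_one hb₂).2 hb, by field_simp; linarith, by field_simp⟩
  have hM2 : InFourthQuadrant ((1 + c * (phi α β a₂ b₂ (I * ω) - 1)) /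
      (1 + (phi α β a₂ b₂ (I * ω) - 1))) :=
    inFourthQuadrant_one_add_mul_div_one_add
      (re_phi_I_mul_sub_one_nonneg hα hb₂.le hT3₂ hω)
      (im_phi_I_mul_sub_one_pos hα hb₂.le hT2s hω) hc₀ hc₁
  rw [add_sub_cancel, ← phi_mul_mul] at hM2
  exact ⟨hM2.1, hM2.2, hM2.cpow_one_half.1, hM2.cpow_one_half.2⟩

/-- Under `a₂ > a₁ > 0`, `b₂ > b₁ > 0`, (T1), strict (T2₂) and (T3₁), (T3₂): for every
`ω > 0`, `M²(iω) = Q(iω)/P(iω)` has positive real part and negative imaginary part, and so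
does its principal square root `M(iω) = (Q(iω)/P(iω))^{1/2}`. -/
theorem stmt_18 (α β a₁ a₂ b₁ b₂ : ℝ) (hα : α ∈ Set.Ioo (0:ℝ) 1) (hβ : 0 < β)
    (ha₁ : 0 < a₁) (ha : a₁ < a₂) (hb₁ : 0 < b₁) (hb : b₁ < b₂)
    (hT1 : a₂ * b₁ = a₁ * b₂) (hT2s : a₂ > 2 * b₂ * Ccot α β)
    (hT3₁ : a₁ ≥ 2 * b₁ * Ctan α β) (hT3₂ : a₂ ≥ 2 * b₂ * Ctan α β) :
    ∀ ω : ℝ, 0 < ω →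
      0 < (phi α β a₁ b₁ (Complex.I * (ω : ℂ)) / phi α β a₂ b₂ (Complex.I * (ω : ℂ))).re ∧
      (phi α β a₁ b₁ (Complex.I * (ω : ℂ)) / phi α β a₂ b₂ (Complex.I * (ω : ℂ))).im < 0 ∧
      0 < ((phi α β a₁ b₁ (Complex.I * (ω : ℂ)) / phi α β a₂ b₂ (Complex.I * (ω : ℂ))) ^
            ((1 : ℂ) / 2)).re ∧
      ((phi α β a₁ b₁ (Complex.I * (ω : ℂ)) / phi α β a₂ b₂ (Complex.I * (ω : ℂ))) ^
            ((1 : ℂ) / 2)).im < 0 :=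
  stmt_18_general α β a₁ a₂ b₁ b₂ hα hb₁ hb hT1 hT2s hT3₂
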